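/- Fix a prime p and an integer n ≥ 1. Define E_n as the set of formal 2×2 matrices [[a, b], [c, d]] with a, d ∈ F_p[ε]/(ε^{n+1}) and b, c ∈ F_p[ε]/(ε^n), with addition componentwise and multiplication given by the usual 2×2 matrix formula except that each product of two off-diagonal entries (b·c' or c·b') is first computed in F_p[ε]/(ε^n) and then multiplied by ε and viewed in F_p[ε]/(ε^{n+1}) (via the multiplication map x ↦ ε·x), while products of a diagonal entry with an off-diagonal entry reduce the diagonal entry modulo ε^n. Then E_n is an associative unital F_p[ε]/(ε^{n+1})-algebra. -/

import Mathlib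

open Polynomial

noncomputable section

/-- `F_p[ε]/(ε^k)`, realized as `F_p[X]/(X^k)`. -/
abbrev Rq (p k : ℕ) : Type :=
  Polynomial (ZMod p) ⧸ Ideal.span {(X : Polynomial (ZMod p)) ^ k}

/-- The quotient map `F_p[X] → F_p[ε]/(ε^k)`. -/
abbrev mkq (p k : ℕ) : Polynomial (ZMod p) →+* Rq p k := Ideal.Quotient.mk _

/-- The reduction map `F_p[ε]/(ε^{k+1}) → F_p[ε]/(ε^k)`. -/
def redq (p k : ℕ) : Rq p (k + 1) →+* Rq p k :=
  Ideal.Quotient.factor (by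
    rw [Ideal.span_singleton_le_span_singleton]
    exact pow_dvd_pow X (Nat.le_succ k))

/-- The multiplication-by-`ε` map `F_p[ε]/(ε^k) → F_p[ε]/(ε^{k+1})`. -/
def epsq (p k : ℕ) : Rq p k →ₗ[Polynomial (ZMod p)] Rq p (k + 1) :=
  Submodule.mapQ _ _ (LinearMap.mulLeft (Polynomial (ZMod p)) X)
    (by
      refine Submodule.span_le.mpr ?_
      rintro f hf
      rw [Set.mem_singleton_iff] at hf
      subst hf
      rw [SetLike.mem_coe, Submodule.mem_comap, LinearMap.mulLeft_apply]
      exact Ideal.mem_span_singleton.mpr ⟨1, by ring⟩)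

/-- The carrier of the 1-reducible GMA `E_n`: formal matrices `[[a,b],[c,d]]` with `a, d` in
`F_p[ε]/(ε^{n+1})` and `b, c` in `F_p[ε]/(ε^n)`, encoded as `(a, b, c, d)`. -/
abbrev GMA (p n : ℕ) : Type := Rq p (n + 1) × Rq p n × Rq p n × Rq p (n + 1)

namespace GMA

/-- The 1-reducible GMA multiplication: usual 2×2 matrix multiplication, except that the
product of two off-diagonal entries is computed in `F_p[ε]/(ε^n)` and then multiplied into
`F_p[ε]/(ε^{n+1})` by `ε`, while products of a diagonal entry with an off-diagonal entry
reduce the diagonal entry modulo `ε^n`. -/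
def mul {p n : ℕ} (x y : GMA p n) : GMA p n :=
  ( x.1 * y.1 + epsq p n (x.2.1 * y.2.2.1),
    redq p n x.1 * y.2.1 + x.2.1 * redq p n y.2.2.2,
    x.2.2.1 * redq p n y.1 + redq p n x.2.2.2 * y.2.2.1,
    x.2.2.2 * y.2.2.2 + epsq p n (x.2.2.1 * y.2.1) )

/-- The multiplicative identity of `E_n`. -/
def one (p n : ℕ) : GMA p n := (1, 0, 0, 1)

/-- The `F_p[ε]/(ε^{n+1})`-scalar multiplication on `E_n`. -/
def smul {p n : ℕ} (r : Rq p (n + 1)) (x : GMA p n) : GMA p n :=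
  (r * x.1, redq p n r * x.2.1, redq p n r * x.2.2.1, r * x.2.2.2)

end GMA


/-! Every entry of an element of `E_n` lifts to `F_p[X]`, and on lifts the reduction map is the
identity while multiplication by `ε` is multiplication by `X`. A quadruple of polynomials
`(a, b, c, d)` multiplies like the matrix `[[a, b], [X c, d]]`, so each algebra axiom of `E_n` is
the image of a polynomial identity of `2 × 2` matrices. -/

lemma mkq_surjective (p k : ℕ) : Function.Surjective (mkq p k) :=
  Ideal.Quotient.mk_surjective

@[simp]
lemma redq_mkq (p k : ℕ) (f : Polynomial (ZMod p)) :
    redq p k (mkq p (k + 1) f) = mkq p k f := rfl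

@[simp]
lemma epsq_mkq (p k : ℕ) (f : Polynomial (ZMod p)) :
    epsq p k (mkq p k f) = mkq p (k + 1) (X * f) := rfl

namespace GMA

variable {p n : ℕ}

def lift (p n : ℕ) (a b c d : Polynomial (ZMod p)) : GMA p n :=
  (mkq p (n + 1) a, mkq p n b, mkq p n c, mkq p (n + 1) d)

lemma exists_eq_lift (x : GMA p n) : ∃ a b c d, x = lift p n a b c d := by
  obtain ⟨a, b, c, d⟩ := x
  obtain ⟨a, rfl⟩ := mkq_surjective p (n + 1) a
  obtain ⟨b, rfl⟩ := mkq_surjective p n b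
  obtain ⟨c, rfl⟩ := mkq_surjective p n c
  obtain ⟨d, rfl⟩ := mkq_surjective p (n + 1) d
  exact ⟨a, b, c, d, rfl⟩

lemma one_eq_lift : one p n = lift p n 1 0 0 1 := by
  simp [one, lift]

lemma lift_add_lift (a b c d a' b' c' d' : Polynomial (ZMod p)) :
    lift p n a b c d + lift p n a' b' c' d' = lift p n (a + a') (b + b') (c + c') (d + d') := by
  simp [lift]

lemma lift_mul_lift (a b c d a' b' c' d' : Polynomial (ZMod p)) :
    mul (lift p n a b c d) (lift p n a' b' c' d') =
      lift p n (a * a' + X * (b * c')) (a * b' + b * d') (c * a' + d * c')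
        (d * d' + X * (c * b')) := by
  simp only [mul, lift, redq_mkq, ← map_mul, epsq_mkq, ← map_add]

lemma smul_lift (r a b c d : Polynomial (ZMod p)) :
    smul (mkq p (n + 1) r) (lift p n a b c d) = lift p n (r * a) (r * b) (r * c) (r * d) := by
  simp [smul, lift]

protected lemma mul_assoc (x y z : GMA p n) : mul (mul x y) z = mul x (mul y z) := by
  obtain ⟨a, b, c, d, rfl⟩ := exists_eq_lift x
  obtain ⟨a', b', c', d', rfl⟩ := exists_eq_lift y
  obtain ⟨a'', b'', c'', d'', rfl⟩ := exists_eq_lift z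
  simp only [lift_mul_lift]
  congr 1 <;> ring

protected lemma one_mul (x : GMA p n) : mul (one p n) x = x := by
  obtain ⟨a, b, c, d, rfl⟩ := exists_eq_lift x
  rw [one_eq_lift, lift_mul_lift]
  congr 1 <;> ring

protected lemma mul_one (x : GMA p n) : mul x (one p n) = x := by
  obtain ⟨a, b, c, d, rfl⟩ := exists_eq_lift x
  rw [one_eq_lift, lift_mul_lift]
  congr 1 <;> ring

protected lemma add_mul (x y z : GMA p n) : mul (x + y) z = mul x z + mul y z := by
  obtain ⟨a, b, c, d, rfl⟩ := exists_eq_lift x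
  obtain ⟨a', b', c', d', rfl⟩ := exists_eq_lift y
  obtain ⟨a'', b'', c'', d'', rfl⟩ := exists_eq_lift z
  simp only [lift_add_lift, lift_mul_lift]
  congr 1 <;> ring

protected lemma mul_add (x y z : GMA p n) : mul x (y + z) = mul x y + mul x z := by
  obtain ⟨a, b, c, d, rfl⟩ := exists_eq_lift x
  obtain ⟨a', b', c', d', rfl⟩ := exists_eq_lift y
  obtain ⟨a'', b'', c'', d'', rfl⟩ := exists_eq_lift z
  simp only [lift_add_lift, lift_mul_lift]
  congr 1 <;> ring

protected lemma one_smul (x : GMA p n) : smul 1 x = x := by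
  simp [smul]

protected lemma mul_smul (r s : Rq p (n + 1)) (x : GMA p n) :
    smul (r * s) x = smul r (smul s x) := by
  simp [smul, mul_assoc]

protected lemma add_smul (r s : Rq p (n + 1)) (x : GMA p n) :
    smul (r + s) x = smul r x + smul s x := by
  simp [smul, add_mul]

protected lemma smul_add (r : Rq p (n + 1)) (x y : GMA p n) :
    smul r (x + y) = smul r x + smul r y := by
  simp [smul, mul_add]

protected lemma smul_mul_assoc (r : Rq p (n + 1)) (x y : GMA p n) :
    mul (smul r x) y = smul r (mul x y) := by
  obtain ⟨r, rfl⟩ := mkq_surjective p (n + 1) r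
  obtain ⟨a, b, c, d, rfl⟩ := exists_eq_lift x
  obtain ⟨a', b', c', d', rfl⟩ := exists_eq_lift y
  simp only [smul_lift, lift_mul_lift]
  congr 1 <;> ring

protected lemma mul_smul_comm (r : Rq p (n + 1)) (x y : GMA p n) :
    mul x (smul r y) = smul r (mul x y) := by
  obtain ⟨r, rfl⟩ := mkq_surjective p (n + 1) r
  obtain ⟨a, b, c, d, rfl⟩ := exists_eq_lift x
  obtain ⟨a', b', c', d', rfl⟩ := exists_eq_lift y
  simp only [smul_lift, lift_mul_lift]
  congr 1 <;> ring

end GMA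

theorem gma_is_associative_unital_algebra_general (p n : ℕ) :
    (∀ x y z : GMA p n, GMA.mul (GMA.mul x y) z = GMA.mul x (GMA.mul y z)) ∧
    (∀ x : GMA p n, GMA.mul (GMA.one p n) x = x) ∧
    (∀ x : GMA p n, GMA.mul x (GMA.one p n) = x) ∧
    (∀ x y z : GMA p n, GMA.mul (x + y) z = GMA.mul x z + GMA.mul y z) ∧
    (∀ x y z : GMA p n, GMA.mul x (y + z) = GMA.mul x y + GMA.mul x z) ∧
    (∀ x : GMA p n, GMA.smul (1 : Rq p (n + 1)) x = x) ∧
    (∀ (r s : Rq p (n + 1)) (x : GMA p n),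
      GMA.smul (r * s) x = GMA.smul r (GMA.smul s x)) ∧
    (∀ (r s : Rq p (n + 1)) (x : GMA p n),
      GMA.smul (r + s) x = GMA.smul r x + GMA.smul s x) ∧
    (∀ (r : Rq p (n + 1)) (x y : GMA p n),
      GMA.smul r (x + y) = GMA.smul r x + GMA.smul r y) ∧
    (∀ (r : Rq p (n + 1)) (x y : GMA p n),
      GMA.mul (GMA.smul r x) y = GMA.smul r (GMA.mul x y)) ∧
    (∀ (r : Rq p (n + 1)) (x y : GMA p n),
      GMA.mul x (GMA.smul r y) = GMA.smul r (GMA.mul x y)) :=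
  ⟨GMA.mul_assoc, GMA.one_mul, GMA.mul_one, GMA.add_mul, GMA.mul_add, GMA.one_smul,
    GMA.mul_smul, GMA.add_smul, GMA.smul_add, GMA.smul_mul_assoc, GMA.mul_smul_comm⟩

/-- `E_n` is an associative unital `F_p[ε]/(ε^{n+1})`-algebra: the GMA
multiplication is associative, `(1,0,0,1)` is a two-sided identity, multiplication is
bi-additive, and the scalar multiplication satisfies the module and algebra axioms. -/
theorem gma_is_associative_unital_algebra (p n : ℕ) [Fact p.Prime] :
    (∀ x y z : GMA p n, GMA.mul (GMA.mul x y) z = GMA.mul x (GMA.mul y z)) ∧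
    (∀ x : GMA p n, GMA.mul (GMA.one p n) x = x) ∧
    (∀ x : GMA p n, GMA.mul x (GMA.one p n) = x) ∧
    (∀ x y z : GMA p n, GMA.mul (x + y) z = GMA.mul x z + GMA.mul y z) ∧
    (∀ x y z : GMA p n, GMA.mul x (y + z) = GMA.mul x y + GMA.mul x z) ∧
    (∀ x : GMA p n, GMA.smul (1 : Rq p (n + 1)) x = x) ∧
    (∀ (r s : Rq p (n + 1)) (x : GMA p n),
      GMA.smul (r * s) x = GMA.smul r (GMA.smul s x)) ∧
    (∀ (r s : Rq p (n + 1)) (x : GMA p n),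
      GMA.smul (r + s) x = GMA.smul r x + GMA.smul s x) ∧
    (∀ (r : Rq p (n + 1)) (x y : GMA p n),
      GMA.smul r (x + y) = GMA.smul r x + GMA.smul r y) ∧
    (∀ (r : Rq p (n + 1)) (x y : GMA p n),
      GMA.mul (GMA.smul r x) y = GMA.smul r (GMA.mul x y)) ∧
    (∀ (r : Rq p (n + 1)) (x y : GMA p n),
      GMA.mul x (GMA.smul r y) = GMA.smul r (GMA.mul x y)) :=
  gma_is_associative_unital_algebra_general p n

end
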